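/- arXiv:1901.09008 — 7 statements merged into one kernel-verified Lean document; each statement's English description precedes it below -/
import Mathlib

section
/- Let G be a simple graph on a vertex type V, let c be a proper coloring of G with colors in the Klein four-group ZMod 2 × ZMod 2, and let w be a closed walk in G. Then for any two nonzero elements x and y of ZMod 2 × ZMod 2, the number of darts d of w whose induced edge color c d.fst + c d.snd equals x is congruent modulo 2 to the number of darts whose induced edge color equals y. In other words, the numbers of traversed edges of each of the three edge colors along any closed walk all have the same parity. -/
private lemma klein_double (z : ZMod 2 × ZMod 2) : z + z = 0 := by
  revert z; decide

private lemma klein_cases (z : ZMod 2 × ZMod 2) (hz : z ≠ 0) :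
    z = (1,0) ∨ z = (0,1) ∨ z = (1,1) := by
  revert hz; revert z; decide

private lemma klein_add_ne (a b : ZMod 2 × ZMod 2) (h : a ≠ b) : a + b ≠ 0 := by
  revert h; revert a b; decide

private lemma klein_mid (a b d : ZMod 2 × ZMod 2) : a + b + (b + d) = a + d := by
  revert a b d; decide

private lemma walk_sum {V : Type*} {G : SimpleGraph V} (c : V → (ZMod 2 × ZMod 2))
    {u v : V} (w : G.Walk u v) :
    (w.darts.map (fun d => c d.fst + c d.snd)).sum = c u + c v := by
  induction w with
  | nil => simp [klein_double]
  | cons h p ih =>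
      simp only [SimpleGraph.Walk.darts_cons, List.map_cons, List.sum_cons, ih]
      exact klein_mid _ _ _

private lemma count_decomp (L : List (ZMod 2 × ZMod 2)) (h : ∀ z ∈ L, z ≠ 0) :
    L.sum = (((L.count (1,0) + L.count (1,1) : ℕ) : ZMod 2),
             ((L.count (0,1) + L.count (1,1) : ℕ) : ZMod 2)) := by
  induction L with
  | nil => simp; rfl
  | cons z t ih =>
      have hz := h z List.mem_cons_self
      have ht : ∀ z ∈ t, z ≠ 0 := fun z hm => h z (List.mem_cons_of_mem _ hm)
      rcases klein_cases z hz with rfl | rfl | rfl <;>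
      simp only [List.sum_cons, ih ht, List.count_cons, Prod.mk_add_mk, Prod.mk.injEq] <;>
      norm_num [Prod.ext_iff] <;>
      first
        | trivial
        | (constructor <;> (try push_cast) <;> ring)
        | (push_cast; ring)

/-- For a proper coloring `c` of `G` with colors in the Klein four-group and a
closed walk `w`, for any two nonzero elements `x, y`, the number of darts of
`w` with induced edge color `x` is congruent mod 2 to the number with induced
edge color `y`. -/
theorem stmt_3 {V : Type*} (G : SimpleGraph V) (c : G.Coloring (ZMod 2 × ZMod 2))
    {u : V} (w : G.Walk u u) (x y : ZMod 2 × ZMod 2) (hx : x ≠ 0) (hy : y ≠ 0) :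
    (w.darts.map (fun d => c d.fst + c d.snd)).count x ≡
      (w.darts.map (fun d => c d.fst + c d.snd)).count y [MOD 2] := by
  set L := w.darts.map (fun d => c d.fst + c d.snd) with hL
  have hne : ∀ z ∈ L, z ≠ 0 := by
    intro z hz
    rw [hL, List.mem_map] at hz
    obtain ⟨d, hd, rfl⟩ := hz
    exact klein_add_ne _ _ (c.valid d.adj)
  have hsum : L.sum = 0 := by rw [hL, walk_sum, klein_double]
  have hd := count_decomp L hne
  rw [hsum] at hd
  set na := L.count (1,0)
  set nb := L.count (0,1)
  set nc := L.count (1,1)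
  have h1 : na + nc ≡ 0 [MOD 2] := by
    have : ((na + nc : ℕ) : ZMod 2) = ((0 : ℕ) : ZMod 2) := by
      rw [Prod.ext_iff] at hd; simpa using hd.1.symm
    exact (ZMod.natCast_eq_natCast_iff _ _ _).1 this
  have h2 : nb + nc ≡ 0 [MOD 2] := by
    have : ((nb + nc : ℕ) : ZMod 2) = ((0 : ℕ) : ZMod 2) := by
      rw [Prod.ext_iff] at hd; simpa using hd.2.symm
    exact (ZMod.natCast_eq_natCast_iff _ _ _).1 this
  unfold Nat.ModEq at h1 h2 ⊢
  have hxc := klein_cases x hx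
  have hyc := klein_cases y hy
  rcases hxc with rfl | rfl | rfl <;> rcases hyc with rfl | rfl | rfl <;> omega
end

section
/- Let G be a simple graph on a vertex type V, let c be a proper coloring of G with colors in the Klein four-group ZMod 2 × ZMod 2, and let w be a closed walk in G of length n. Then for every nonzero element x of ZMod 2 × ZMod 2, the number of darts d of w with induced edge color c d.fst + c d.snd = x is congruent to n modulo 2. -/
private def kphi (x y : ZMod 2 × ZMod 2) : ZMod 2 := x.1 * y.2 + x.2 * y.1

private lemma kphi_key : ∀ x a : ZMod 2 × ZMod 2, x ≠ 0 → a ≠ 0 →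
    ((if a = x then 1 else 0 : ZMod 2)) = 1 + kphi x a := by decide

private lemma kphi_add (x a b : ZMod 2 × ZMod 2) :
    kphi x (a + b) = kphi x a + kphi x b := by
  simp [kphi]; ring

private lemma count_lemma (x : ZMod 2 × ZMod 2) (hx : x ≠ 0) :
    ∀ l : List (ZMod 2 × ZMod 2), (∀ y ∈ l, y ≠ 0) →
      ((l.count x : ZMod 2)) = (l.length : ZMod 2) + kphi x l.sum := by
  intro l
  induction l with
  | nil => intro _; simp [kphi]
  | cons a l ih =>
    intro h
    have ha : a ≠ 0 := h a List.mem_cons_self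
    have hl := ih (fun y hy => h y (List.mem_cons_of_mem a hy))
    rw [List.count_cons, List.sum_cons, kphi_add]
    push_cast
    simp only [beq_iff_eq]
    rw [hl, kphi_key x a hx ha, List.length_cons]
    push_cast
    ring

private lemma sum_darts {V : Type*} (G : SimpleGraph V)
    (c : G.Coloring (ZMod 2 × ZMod 2)) {u v : V} (w : G.Walk u v) :
    (w.darts.map (fun d => c d.fst + c d.snd)).sum = c u + c v := by
  induction w with
  | nil =>
    simp only [SimpleGraph.Walk.darts_nil, List.map_nil, List.sum_nil]
    exact (CharTwo.add_self_eq_zero _).symm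
  | cons h p ih =>
    rw [SimpleGraph.Walk.darts_cons, List.map_cons, List.sum_cons, ih]
    have : ∀ a b d : ZMod 2 × ZMod 2, (a + b) + (b + d) = a + d := by decide
    exact this _ _ _

/-- For a proper coloring `c` of `G` with colors in the Klein four-group and a
closed walk `w` of length `n`, for every nonzero element `x`, the number of
darts of `w` with induced edge color `x` is congruent to `n` mod 2. -/
theorem stmt_4 {V : Type*} (G : SimpleGraph V) (c : G.Coloring (ZMod 2 × ZMod 2))
    {u : V} (w : G.Walk u u) (x : ZMod 2 × ZMod 2) (hx : x ≠ 0) :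
    (w.darts.map (fun d => c d.fst + c d.snd)).count x ≡ w.length [MOD 2] := by
  have hnz : ∀ y ∈ w.darts.map (fun d => c d.fst + c d.snd), y ≠ 0 := by
    intro y hy
    obtain ⟨d, hd, rfl⟩ := List.mem_map.mp hy
    have hadj : G.Adj d.fst d.snd := d.adj
    have hne : c d.fst ≠ c d.snd := c.valid hadj
    intro h0
    apply hne
    have : ∀ a b : ZMod 2 × ZMod 2, a + b = 0 → a = b := by decide
    exact this _ _ h0
  have hsum : (w.darts.map (fun d => c d.fst + c d.snd)).sum = 0 := by
    rw [sum_darts]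
    exact CharTwo.add_self_eq_zero _
  have := count_lemma x hx _ hnz
  rw [hsum] at this
  have hφ : kphi x 0 = 0 := by simp [kphi]
  rw [hφ, add_zero, List.length_map, SimpleGraph.Walk.length_darts] at this
  exact (ZMod.natCast_eq_natCast_iff _ _ _).mp this
end

section
/- Let n be a positive natural number and let f : ZMod n → ZMod 3 satisfy f (i + 1) ≠ f i for every i : ZMod n. Then the number of indices i with f (i + 1) − f i = 1 is congruent modulo 3 to the number of indices i with f (i + 1) − f i = 2. -/
/-- For a positive `n` and `f : ZMod n → ZMod 3` with `f (i+1) ≠ f i` for all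
`i`, the number of indices with `f (i+1) - f i = 1` is congruent mod 3 to the
number of indices with `f (i+1) - f i = 2`. -/
theorem stmt_5 (n : ℕ) (hn : 0 < n) (f : ZMod n → ZMod 3)
    (hf : ∀ i : ZMod n, f (i + 1) ≠ f i) :
    haveI : NeZero n := ⟨hn.ne'⟩
    (Finset.univ.filter (fun i : ZMod n => f (i + 1) - f i = 1)).card ≡
      (Finset.univ.filter (fun i : ZMod n => f (i + 1) - f i = 2)).card [MOD 3] := by
  haveI : NeZero n := ⟨hn.ne'⟩
  set g : ZMod n → ZMod 3 := fun i => f (i + 1) - f i with hg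
  have hsum : ∑ i : ZMod n, g i = 0 := by
    have h1 : ∑ i : ZMod n, f (i + 1) = ∑ i : ZMod n, f i :=
      Fintype.sum_equiv (Equiv.addRight (1 : ZMod n)) _ _ (fun i => rfl)
    simp [hg, Finset.sum_sub_distrib, h1]
  have hval : ∀ i : ZMod n, g i ≠ 1 → g i = 2 := by
    intro i h1
    have h0 : g i ≠ 0 := sub_ne_zero.mpr (hf i)
    revert h0 h1; revert i
    intro i; generalize g i = x; revert x; decide
  have hsplit := Finset.sum_filter_add_sum_filter_not Finset.univ
    (fun i : ZMod n => g i = 1) g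
  rw [hsum] at hsplit
  have he1 : ∑ i ∈ Finset.univ.filter (fun i : ZMod n => g i = 1), g i =
      (Finset.univ.filter (fun i : ZMod n => g i = 1)).card • (1 : ZMod 3) := by
    rw [Finset.sum_congr rfl (fun i hi => (Finset.mem_filter.mp hi).2),
      Finset.sum_const]
  have hfe : Finset.univ.filter (fun i : ZMod n => ¬ g i = 1) =
      Finset.univ.filter (fun i : ZMod n => g i = 2) := by
    apply Finset.filter_congr
    intro i _
    constructor
    · intro h; simp [hval i h]
    · intro h h1; rw [h1] at h; exact absurd h (by decide)
  rw [hfe] at hsplit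
  have he2 : ∑ i ∈ Finset.univ.filter (fun i : ZMod n => g i = 2), g i =
      (Finset.univ.filter (fun i : ZMod n => g i = 2)).card • (2 : ZMod 3) := by
    rw [Finset.sum_congr rfl (fun i hi => (Finset.mem_filter.mp hi).2),
      Finset.sum_const]
  rw [he1, he2] at hsplit
  set a := (Finset.univ.filter (fun i : ZMod n => g i = 1)).card
  set b := (Finset.univ.filter (fun i : ZMod n => g i = 2)).card
  rw [← ZMod.natCast_eq_natCast_iff]
  have hab : (a : ZMod 3) + (b : ZMod 3) * 2 = 0 := by
    simpa [nsmul_eq_mul, mul_comm] using hsplit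
  have h3 : (3 : ZMod 3) = 0 := by decide
  linear_combination hab - (b : ZMod 3) * h3
end

section
/- Let G be a simple graph on a vertex type V, let v be a vertex whose neighbors are exactly the four vertices n1, n2, n3, n4, and let c be a proper coloring with colors in Fin 4 of the subgraph G' of G induced on V \ {v} under which n1, n2, n3, n4 receive four pairwise distinct colors. Let H be the subgraph of G' induced on the set of vertices u with c u = c n1 or c u = c n3. If n1 and n3 are not reachable from each other in H (they lie in different connected components of the two-color subgraph), then G admits a proper coloring with colors in Fin 4. -/
/-- Kempe's chain argument for a degree-4 vertex: if the four neighbors of `v`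
get four distinct colors under a proper 4-coloring `c` of the graph induced on
`V \ {v}`, and `n1`, `n3` are not reachable from each other in the two-color
subgraph on the colors `c n1`, `c n3`, then `G` is 4-colorable. -/
theorem stmt_10 {V : Type*} (G : SimpleGraph V) (v : V)
    (n1 n2 n3 n4 : ({v}ᶜ : Set V))
    (hnbr : G.neighborSet v = {(n1 : V), (n2 : V), (n3 : V), (n4 : V)})
    (c : (G.induce ({v}ᶜ : Set V)).Coloring (Fin 4))
    (h12 : c n1 ≠ c n2) (h13 : c n1 ≠ c n3) (h14 : c n1 ≠ c n4)
    (h23 : c n2 ≠ c n3) (h24 : c n2 ≠ c n4) (h34 : c n3 ≠ c n4)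
    (hreach : ¬ ((G.induce ({v}ᶜ : Set V)).induce
        {u : ({v}ᶜ : Set V) | c u = c n1 ∨ c u = c n3}).Reachable
        ⟨n1, Or.inl rfl⟩ ⟨n3, Or.inr rfl⟩) :
    G.Colorable 4 := by
  classical
  set S : Set ({v}ᶜ : Set V) := {u : ({v}ᶜ : Set V) | c u = c n1 ∨ c u = c n3} with hSdef
  set H := (G.induce ({v}ᶜ : Set V)).induce S with hHdef
  set σ := Equiv.swap (c n1) (c n3) with hσ
  set R : ({v}ᶜ : Set V) → Prop :=
    fun u => ∃ hu : u ∈ S, H.Reachable ⟨n1, Or.inl rfl⟩ ⟨u, hu⟩ with hR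
  set c' : ({v}ᶜ : Set V) → Fin 4 := fun u => if R u then σ (c u) else c u with hc'
  have hRn1 : R n1 := ⟨Or.inl rfl, SimpleGraph.Reachable.refl _⟩
  have hRn3 : ¬ R n3 := by
    rintro ⟨hu, hr⟩
    exact hreach hr
  have hcn1 : c' n1 = c n3 := by
    simp only [hc', if_pos hRn1, hσ, Equiv.swap_apply_left]
  have hcn3 : c' n3 = c n3 := by
    simp only [hc', if_neg hRn3]
  have hcn2 : c' n2 = c n2 := by
    have : ¬ R n2 := by
      rintro ⟨hu, -⟩
      rcases hu with h | h
      · exact h12 h.symm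
      · exact h23 h
    simp only [hc', if_neg this]
  have hcn4 : c' n4 = c n4 := by
    have : ¬ R n4 := by
      rintro ⟨hu, -⟩
      rcases hu with h | h
      · exact h14 h.symm
      · exact h34 h.symm
    simp only [hc', if_neg this]
  have hproper : ∀ x y : ({v}ᶜ : Set V), G.Adj ↑x ↑y → c' x ≠ c' y := by
    intro x y hadj
    have hadj' : (G.induce ({v}ᶜ : Set V)).Adj x y := hadj
    have hc : c x ≠ c y := c.valid hadj'
    by_cases hx : R x <;> by_cases hy : R y
    · simp only [hc', if_pos hx, if_pos hy]
      exact fun h => hc (σ.injective h)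
    · simp only [hc', if_pos hx, if_neg hy]
      obtain ⟨hxS, hxr⟩ := hx
      by_cases hyS : y ∈ S
      · exfalso
        have hadjH : H.Adj ⟨x, hxS⟩ ⟨y, hyS⟩ := hadj'
        exact hy ⟨hyS, hxr.trans hadjH.reachable⟩
      · intro h
        apply hyS
        rcases hxS with hxa | hxb
        · rw [hxa, hσ, Equiv.swap_apply_left] at h; exact Or.inr h.symm
        · rw [hxb, hσ, Equiv.swap_apply_right] at h; exact Or.inl h.symm
    · simp only [hc', if_neg hx, if_pos hy]
      obtain ⟨hyS, hyr⟩ := hy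
      by_cases hxS : x ∈ S
      · exfalso
        have hadjH : H.Adj ⟨y, hyS⟩ ⟨x, hxS⟩ := hadj'.symm
        exact hx ⟨hxS, hyr.trans hadjH.reachable⟩
      · intro h
        apply hxS
        rcases hyS with hya | hyb
        · rw [hya, hσ, Equiv.swap_apply_left] at h; exact Or.inr h
        · rw [hyb, hσ, Equiv.swap_apply_right] at h; exact Or.inl h
    · simp only [hc', if_neg hx, if_neg hy]; exact hc
  refine ⟨SimpleGraph.Coloring.mk
    (fun u => if h : u = v then c n1 else c' ⟨u, h⟩) ?_⟩
  intro u w hadj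
  by_cases hu : u = v <;> by_cases hw : w = v
  · exact absurd (hu ▸ hw ▸ hadj) (G.irrefl)
  · simp only [dif_pos hu, dif_neg hw]
    have hwmem : w ∈ G.neighborSet v := hu ▸ hadj
    rw [hnbr] at hwmem
    simp only [Set.mem_insert_iff, Set.mem_singleton_iff] at hwmem
    rcases hwmem with h | h | h | h
    · have e : (⟨w, hw⟩ : ({v}ᶜ : Set V)) = n1 := Subtype.ext h
      rw [e, hcn1]; exact h13
    · have e : (⟨w, hw⟩ : ({v}ᶜ : Set V)) = n2 := Subtype.ext h
      rw [e, hcn2]; exact h12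
    · have e : (⟨w, hw⟩ : ({v}ᶜ : Set V)) = n3 := Subtype.ext h
      rw [e, hcn3]; exact h13
    · have e : (⟨w, hw⟩ : ({v}ᶜ : Set V)) = n4 := Subtype.ext h
      rw [e, hcn4]; exact h14
  · simp only [dif_pos hw, dif_neg hu]
    have humem : u ∈ G.neighborSet v := hw ▸ hadj.symm
    rw [hnbr] at humem
    simp only [Set.mem_insert_iff, Set.mem_singleton_iff] at humem
    rcases humem with h | h | h | h
    · have e : (⟨u, hu⟩ : ({v}ᶜ : Set V)) = n1 := Subtype.ext h
      rw [e, hcn1]; exact fun hh => h13 hh.symm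
    · have e : (⟨u, hu⟩ : ({v}ᶜ : Set V)) = n2 := Subtype.ext h
      rw [e, hcn2]; exact fun hh => h12 hh.symm
    · have e : (⟨u, hu⟩ : ({v}ᶜ : Set V)) = n3 := Subtype.ext h
      rw [e, hcn3]; exact fun hh => h13 hh.symm
    · have e : (⟨u, hu⟩ : ({v}ᶜ : Set V)) = n4 := Subtype.ext h
      rw [e, hcn4]; exact fun hh => h14 hh.symm
  · simp only [dif_neg hu, dif_neg hw]
    exact hproper ⟨u, hu⟩ ⟨w, hw⟩ hadj
end

section
/- Let f : ZMod 5 → ZMod 2 × ZMod 2 satisfy f (i + 1) ≠ f i for every i : ZMod 5 (a proper coloring of the 5-cycle with colors in the Klein four-group), and define the induced edge colors e i = f i + f (i + 1). Then there exists exactly one nonzero element a of ZMod 2 × ZMod 2 such that the number of indices i with e i = a is 3, and each of the other two nonzero elements occurs as e i for exactly one index i. -/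
/-- For a proper coloring `f` of the 5-cycle with colors in the Klein
four-group, with induced edge colors `e i = f i + f (i+1)`, there is exactly
one nonzero element occurring as edge color 3 times, and each other nonzero
element occurs exactly once. -/
theorem stmt_12 (f : ZMod 5 → ZMod 2 × ZMod 2) (hf : ∀ i : ZMod 5, f (i + 1) ≠ f i) :
    ∃! a : ZMod 2 × ZMod 2, a ≠ 0 ∧
      (Finset.univ.filter (fun i : ZMod 5 => f i + f (i + 1) = a)).card = 3 ∧
      ∀ b : ZMod 2 × ZMod 2, b ≠ 0 → b ≠ a →
        (Finset.univ.filter (fun i : ZMod 5 => f i + f (i + 1) = b)).card = 1 := by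
  have hK : ∀ x : ZMod 2 × ZMod 2, x ≠ 0 → x = (1,0) ∨ x = (0,1) ∨ x = (1,1) := by decide
  have hself : ∀ x : ZMod 2 × ZMod 2, x + x = 0 := by decide
  set e : ZMod 5 → ZMod 2 × ZMod 2 := fun i => f i + f (i + 1) with he
  suffices h : ∃! a : ZMod 2 × ZMod 2, a ≠ 0 ∧
      (Finset.univ.filter (fun i : ZMod 5 => e i = a)).card = 3 ∧
      ∀ b : ZMod 2 × ZMod 2, b ≠ 0 → b ≠ a →
        (Finset.univ.filter (fun i : ZMod 5 => e i = b)).card = 1 by exact h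
  have hne : ∀ i, e i ≠ 0 := by
    intro i h
    apply hf i
    have h' : f i + f (i + 1) = 0 := h
    calc f (i + 1) = f i + (f i + f (i + 1)) := by rw [← add_assoc, hself, zero_add]
      _ = f i := by rw [h', add_zero]
  have hsum : ∑ i : ZMod 5, e i = 0 := by
    have h1 : ∑ i : ZMod 5, f (i + 1) = ∑ i : ZMod 5, f i :=
      Fintype.sum_equiv (Equiv.addRight 1) _ _ (fun i => rfl)
    simp only [he, Finset.sum_add_distrib, h1, hself]
  set t : Finset (ZMod 2 × ZMod 2) := {(1,0),(0,1),(1,1)} with ht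
  have hmem : ∀ i ∈ Finset.univ, e i ∈ t := by
    intro i _
    rcases hK (e i) (hne i) with h | h | h <;> simp [ht, h]
  set n1 := (Finset.univ.filter (fun i : ZMod 5 => e i = (1,0))).card with hn1
  set n2 := (Finset.univ.filter (fun i : ZMod 5 => e i = (0,1))).card with hn2
  set n3 := (Finset.univ.filter (fun i : ZMod 5 => e i = (1,1))).card with hn3
  have hcard : n1 + n2 + n3 = 5 := by
    have h := Finset.card_eq_sum_card_fiberwise hmem
    rw [ht, Finset.sum_insert (by decide), Finset.sum_insert (by decide),
      Finset.sum_singleton] at h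
    simp only [Finset.card_univ, ZMod.card] at h
    omega
  have hconst : ∀ a : ZMod 2 × ZMod 2,
      ∑ i ∈ Finset.univ.filter (fun i : ZMod 5 => e i = a), e i
        = (Finset.univ.filter (fun i : ZMod 5 => e i = a)).card • a := by
    intro a
    rw [Finset.sum_congr rfl (fun i hi => (Finset.mem_filter.mp hi).2), Finset.sum_const]
  have hsum2 : n1 • ((1:ZMod 2),(0:ZMod 2)) + n2 • ((0:ZMod 2),(1:ZMod 2))
      + n3 • ((1:ZMod 2),(1:ZMod 2)) = 0 := by
    have h := Finset.sum_fiberwise_of_maps_to hmem e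
    rw [hsum, ht, Finset.sum_insert (by decide), Finset.sum_insert (by decide),
      Finset.sum_singleton, hconst, hconst, hconst, ← add_assoc] at h
    exact h
  have h13 : 2 ∣ n1 + n3 := by
    have h := congrArg Prod.fst hsum2
    simp only [Prod.fst_add, Prod.smul_fst, Prod.fst_zero, smul_eq_mul, nsmul_eq_mul,
      mul_one, mul_zero, add_zero] at h
    have h' : ((n1 + n3 : ℕ) : ZMod 2) = 0 := by push_cast; simpa using h
    exact (ZMod.natCast_eq_zero_iff _ 2).mp h'
  have h23 : 2 ∣ n2 + n3 := by
    have h := congrArg Prod.snd hsum2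
    simp only [Prod.snd_add, Prod.smul_snd, Prod.snd_zero, smul_eq_mul, nsmul_eq_mul,
      mul_one, mul_zero, zero_add] at h
    have h' : ((n2 + n3 : ℕ) : ZMod 2) = 0 := by push_cast; simpa using h
    exact (ZMod.natCast_eq_zero_iff _ 2).mp h'
  have hcases : (n1 = 3 ∧ n2 = 1 ∧ n3 = 1) ∨ (n1 = 1 ∧ n2 = 3 ∧ n3 = 1)
      ∨ (n1 = 1 ∧ n2 = 1 ∧ n3 = 3) := by omega
  rcases hcases with ⟨h1, h2, h3⟩ | ⟨h1, h2, h3⟩ | ⟨h1, h2, h3⟩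
  · refine ⟨(1,0), ⟨by decide, h1, ?_⟩, ?_⟩
    · intro b hb0 hba
      rcases hK b hb0 with rfl | rfl | rfl
      · exact absurd rfl hba
      · exact h2
      · exact h3
    · rintro y ⟨hy0, hy3, -⟩
      rcases hK y hy0 with rfl | rfl | rfl
      · rfl
      · omega
      · omega
  · refine ⟨(0,1), ⟨by decide, h2, ?_⟩, ?_⟩
    · intro b hb0 hba
      rcases hK b hb0 with rfl | rfl | rfl
      · exact h1
      · exact absurd rfl hba
      · exact h3
    · rintro y ⟨hy0, hy3, -⟩
      rcases hK y hy0 with rfl | rfl | rfl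
      · omega
      · rfl
      · omega
  · refine ⟨(1,1), ⟨by decide, h3, ?_⟩, ?_⟩
    · intro b hb0 hba
      rcases hK b hb0 with rfl | rfl | rfl
      · exact h1
      · exact h2
      · exact absurd rfl hba
    · rintro y ⟨hy0, hy3, -⟩
      rcases hK y hy0 with rfl | rfl | rfl
      · omega
      · omega
      · rfl
end

section
/- Let f : ZMod 5 → ZMod 2 × ZMod 2 satisfy f (i + 1) ≠ f i for every i : ZMod 5, and define the induced edge colors e i = f i + f (i + 1). If the range of f has exactly 3 elements (only three vertex colors appear on the 5-cycle), then there exists an index j with e j = e (j + 1) and e (j + 1) = e (j + 2); that is, the edge color occurring three times occupies three consecutive edges, so the cyclic edge-color pattern is of the form a a a b c. -/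
set_option maxRecDepth 10000
set_option synthInstance.maxHeartbeats 1000000
set_option synthInstance.maxSize 2000
set_option maxHeartbeats 2000000

lemma aux13 : ∀ a b c d e : ZMod 2 × ZMod 2,
    ({a, b, c, d, e} : Finset (ZMod 2 × ZMod 2)).card = 3 →
    b ≠ a → c ≠ b → d ≠ c → e ≠ d → a ≠ e →
    (a + b = b + c ∧ b + c = c + d) ∨
    (b + c = c + d ∧ c + d = d + e) ∨
    (c + d = d + e ∧ d + e = e + a) ∨
    (d + e = e + a ∧ e + a = a + b) ∨
    (e + a = a + b ∧ a + b = b + c) := by decide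

/-- If a proper Klein-group coloring of the 5-cycle uses exactly 3 vertex
colors, then the edge color pattern is `a a a b c`: some three consecutive
edges share the same induced color. -/
theorem stmt_13 (f : ZMod 5 → ZMod 2 × ZMod 2) (hf : ∀ i : ZMod 5, f (i + 1) ≠ f i)
    (hrange : (Set.range f).ncard = 3) :
    ∃ j : ZMod 5, f j + f (j + 1) = f (j + 1) + f (j + 2) ∧
      f (j + 1) + f (j + 2) = f (j + 2) + f (j + 3) := by
  have hcard : (Finset.univ.image f).card = 3 := by
    rw [← hrange, ← Set.ncard_coe_finset]
    congr 1
    rw [Finset.coe_image, Finset.coe_univ, Set.image_univ]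
  have huniv : (Finset.univ : Finset (ZMod 5)) = {0, 1, 2, 3, 4} := by decide
  rw [huniv] at hcard
  simp only [Finset.image_insert, Finset.image_singleton] at hcard
  have h0 : f 1 ≠ f 0 := hf 0
  have h1 : f 2 ≠ f 1 := hf 1
  have h2 : f 3 ≠ f 2 := hf 2
  have h3 : f 4 ≠ f 3 := hf 3
  have h4 : f 0 ≠ f 4 := hf 4
  rcases aux13 (f 0) (f 1) (f 2) (f 3) (f 4) hcard h0 h1 h2 h3 h4 with h | h | h | h | h
  · exact ⟨0, h⟩
  · exact ⟨1, h⟩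
  · exact ⟨2, h⟩
  · exact ⟨3, h⟩
  · exact ⟨4, h⟩
end

section
/- Let f : ZMod 5 → ZMod 2 × ZMod 2 satisfy f (i + 1) ≠ f i for every i : ZMod 5, and define the induced edge colors e i = f i + f (i + 1). If the range of f has exactly 4 elements (all four vertex colors appear on the 5-cycle), then there is no index j with e j = e (j + 1) and e (j + 1) = e (j + 2); that is, the edge color occurring three times never occupies three consecutive edges, so the cyclic edge-color pattern is of the form a a b a c. -/
/-- If a proper Klein-group coloring of the 5-cycle uses all 4 vertex colors,
then no three consecutive edges share the same induced edge color: the edge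
color pattern is `a a b a c`. -/
theorem stmt_14 (f : ZMod 5 → ZMod 2 × ZMod 2) (hf : ∀ i : ZMod 5, f (i + 1) ≠ f i)
    (hrange : (Set.range f).ncard = 4) :
    ¬ ∃ j : ZMod 5, f j + f (j + 1) = f (j + 1) + f (j + 2) ∧
      f (j + 1) + f (j + 2) = f (j + 2) + f (j + 3) := by
  rintro ⟨j, h1, h2⟩
  have e1 : f j = f (j + 2) := by
    have := h1
    rw [add_comm (f j)] at this
    exact add_left_cancel this
  have e2 : f (j + 1) = f (j + 3) := by
    have := h2
    rw [add_comm (f (j + 2))] at this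
    exact add_right_cancel this
  have hsub : Set.range f ⊆ {f j, f (j + 1), f (j + 4)} := by
    rintro x ⟨i, rfl⟩
    have hk : ∀ k : ZMod 5, k = 0 ∨ k = 1 ∨ k = 2 ∨ k = 3 ∨ k = 4 := by decide
    have hij : i = j + (i - j) := by ring
    rcases hk (i - j) with h | h | h | h | h <;> rw [hij, h]
    · simp
    · simp
    · rw [← e1]; simp
    · rw [← e2]; simp
    · simp
  have hle : (Set.range f).ncard ≤ 3 := by
    refine le_trans (Set.ncard_le_ncard hsub (Set.toFinite _)) ?_
    refine le_trans (Set.ncard_insert_le _ _) ?_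
    have := Set.ncard_insert_le (f (j + 1)) ({f (j + 4)} : Set (ZMod 2 × ZMod 2))
    simp [Set.ncard_singleton] at this ⊢
    omega
  omega
end
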